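/- arXiv:2001.05818 — 5 statements merged into one kernel-verified Lean document; each statement's English description precedes it below -/
import Mathlib

section
/- Let A, X, R be polynomials over ℂ with deg A ≥ 2 and deg X ≥ 1, and let d ≥ 1 be an integer such that A^{∘d} = X∘R. Then there exist an integer N with N ≤ ⌊log₂(deg X)⌋ and N ≤ d, and a polynomial R', such that A^{∘N} = X∘R' and R = R'∘A^{∘(d−N)}. -/
/-!
If `d > ⌊log₂ deg X⌋`, then `deg X · deg R = (deg A)^d` with `deg X < 2^d` forces
`deg A ∣ deg R`, and `X ∘ R = A^{∘(d-1)} ∘ A`. This makes `A` a right composition factor of `R`: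
reduce `R = S ∘ A + E` until `E = 0` or `deg A ∤ deg E`; in the latter case
`X ∘ R - X ∘ (S ∘ A) = (A^{∘(d-1)} - X ∘ S) ∘ A` has degree divisible by `deg A`, whereas
factoring out `R - S ∘ A = E` shows its degree is `(deg X - 1) · deg (S ∘ A) + deg E`
(in characteristic zero). Hence `R = S ∘ A` with `A^{∘(d-1)} = X ∘ S`, and we descend in `d`.
-/

open Polynomial

/-- The `k`-th compositional iterate `A^{∘k}` of a polynomial, with `A^{∘0} = X`. -/
noncomputable def polyIter (A : Polynomial ℂ) : ℕ → Polynomial ℂ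
  | 0 => Polynomial.X
  | k + 1 => A.comp (polyIter A k)

open Finset

theorem dvd_of_mul_eq_pow_of_lt_two_pow {m k n d : ℕ} (hn : n ≠ 0) (h : m * k = n ^ (d + 1))
    (hm : m < 2 ^ (d + 1)) : n ∣ k := by
  have hmk : m * k ≠ 0 := h ▸ pow_ne_zero _ hn
  have hm0 : m ≠ 0 := left_ne_zero_of_mul hmk
  have hk0 : k ≠ 0 := right_ne_zero_of_mul hmk
  rw [← Nat.factorization_prime_le_iff_dvd hn hk0]
  intro p hp
  have hv : m.factorization p + k.factorization p = (d + 1) * n.factorization p := by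
    simpa [Nat.factorization_mul hm0 hk0, Nat.factorization_pow] using
      congrArg (·.factorization p) h
  by_contra! hlt
  -- `p` then divides `m` at least `d + 1` times, forcing `m ≥ 2 ^ (d + 1)`
  have hd : d + 1 ≤ m.factorization p := by nlinarith
  have hpow : p ^ (d + 1) ≤ m :=
    Nat.le_of_dvd (Nat.pos_of_ne_zero hm0) ((hp.pow_dvd_iff_le_factorization hm0).2 hd)
  have := Nat.pow_le_pow_left hp.two_le (d + 1)
  omega

namespace Polynomial

section CommRing

variable {R : Type*} [CommRing R]

theorem eq_of_comp_eq_comp [NoZeroDivisors R] {P Q A : R[X]} (hA : 0 < A.natDegree)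
    (h : P.comp A = Q.comp A) : P = Q := by
  have h0 : (P - Q).comp A = 0 := by rw [sub_comp, h, sub_self]
  rcases comp_eq_zero_iff.mp h0 with hPQ | ⟨-, hAC⟩
  · exact sub_eq_zero.mp hPQ
  · rw [hAC, natDegree_C] at hA
    exact absurd hA (lt_irrefl 0)

theorem natDegree_geom_sum₂_le {P Q : R[X]} {m : ℕ} (hP : P.natDegree ≤ m)
    (hQ : Q.natDegree ≤ m) (i : ℕ) :
    (∑ t ∈ range i, P ^ t * Q ^ (i - 1 - t)).natDegree ≤ (i - 1) * m := by
  refine natDegree_sum_le_of_forall_le _ _ fun t ht => natDegree_mul_le.trans ?_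
  have ht : t + (i - 1 - t) = i - 1 := by rw [mem_range] at ht; omega
  calc (P ^ t).natDegree + (Q ^ (i - 1 - t)).natDegree ≤ t * m + (i - 1 - t) * m :=
        add_le_add (natDegree_pow_le_of_le t hP) (natDegree_pow_le_of_le _ hQ)
    _ = (i - 1) * m := by rw [← add_mul, ht]

theorem coeff_geom_sum₂ {P Q : R[X]} {m : ℕ} (hP : P.natDegree ≤ m) (hQ : Q.natDegree ≤ m)
    (hPQ : P.coeff m = Q.coeff m) (i : ℕ) :
    (∑ t ∈ range i, P ^ t * Q ^ (i - 1 - t)).coeff ((i - 1) * m) = i * Q.coeff m ^ (i - 1) := by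
  rw [finsetSum_coeff, sum_congr rfl (g := fun _ => Q.coeff m ^ (i - 1)), sum_const, card_range,
    nsmul_eq_mul]
  intro t ht
  have ht : t + (i - 1 - t) = i - 1 := by rw [mem_range] at ht; omega
  rw [← ht, add_mul, ht, coeff_mul_add_eq_of_natDegree_le (natDegree_pow_le_of_le t hP)
    (natDegree_pow_le_of_le _ hQ), coeff_pow_of_natDegree_le hP, coeff_pow_of_natDegree_le hQ,
    hPQ, ← pow_add, ht]

/-- The quotient `(X ∘ P - X ∘ Q) / (P - Q)`. -/
noncomputable def compSubCompQuot (X P Q : R[X]) : R[X] :=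
  ∑ i ∈ range (X.natDegree + 1), C (X.coeff i) * ∑ t ∈ range i, P ^ t * Q ^ (i - 1 - t)

theorem comp_sub_comp_eq_compSubCompQuot_mul (X P Q : R[X]) :
    X.comp P - X.comp Q = compSubCompQuot X P Q * (P - Q) := by
  simp only [comp, eval₂_eq_sum_range, compSubCompQuot, ← sum_sub_distrib, sum_mul]
  refine sum_congr rfl fun i _ => ?_
  rw [mul_assoc, geom_sum₂_mul, mul_sub]

theorem degree_compSubCompQuot [IsDomain R] [CharZero R] {X P Q : R[X]} {m : ℕ}
    (hX : 0 < X.natDegree) (hm : 0 < m) (hP : P.natDegree ≤ m) (hQ : Q.natDegree ≤ m)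
    (hPQ : P.coeff m = Q.coeff m) (hQm : Q.coeff m ≠ 0) :
    (compSubCompQuot X P Q).degree = ((X.natDegree - 1) * m : ℕ) := by
  set L := X.natDegree
  have hterm (i : ℕ) :
      (C (X.coeff i) * ∑ t ∈ range i, P ^ t * Q ^ (i - 1 - t)).natDegree ≤ (i - 1) * m :=
    (natDegree_C_mul_le _ _).trans (natDegree_geom_sum₂_le hP hQ i)
  have hle : (compSubCompQuot X P Q).natDegree ≤ (L - 1) * m :=
    natDegree_sum_le_of_forall_le _ _ fun i hi =>
      (hterm i).trans (Nat.mul_le_mul_right _ (by rw [mem_range] at hi; omega))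
  -- only the top term `i = L` reaches degree `(L - 1) * m`
  have hcoeff :
      (compSubCompQuot X P Q).coeff ((L - 1) * m) = X.coeff L * (L * Q.coeff m ^ (L - 1)) := by
    rw [compSubCompQuot, finsetSum_coeff, sum_range_succ, coeff_C_mul,
      coeff_geom_sum₂ hP hQ hPQ, sum_eq_zero, zero_add]
    intro i hi
    rw [mem_range] at hi
    rcases Nat.eq_zero_or_pos i with rfl | hi0
    · simp
    · exact coeff_eq_zero_of_natDegree_lt
        ((hterm i).trans_lt (Nat.mul_lt_mul_of_pos_right (by omega) hm))
  refine degree_eq_of_le_of_coeff_ne_zero (degree_le_of_natDegree_le hle) ?_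
  rw [hcoeff]
  exact mul_ne_zero (leadingCoeff_ne_zero.mpr (ne_zero_of_natDegree_gt hX))
    (mul_ne_zero (Nat.cast_ne_zero.mpr hX.ne') (pow_ne_zero _ hQm))

theorem natDegree_comp_add_sub_comp [IsDomain R] [CharZero R] {X B E : R[X]}
    (hX : 0 < X.natDegree) (hE : E ≠ 0) (hEB : E.natDegree < B.natDegree) :
    (X.comp (B + E) - X.comp B).natDegree = (X.natDegree - 1) * B.natDegree + E.natDegree := by
  have hBE : (B + E).natDegree ≤ B.natDegree := natDegree_add_le_of_degree_le le_rfl hEB.le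
  have hcoeff : (B + E).coeff B.natDegree = B.coeff B.natDegree := by
    rw [coeff_add, coeff_eq_zero_of_natDegree_lt hEB, add_zero]
  have hB : B.coeff B.natDegree ≠ 0 :=
    leadingCoeff_ne_zero.mpr (ne_zero_of_natDegree_gt hEB)
  have hQ := degree_compSubCompQuot hX (hEB.trans_le' (Nat.zero_le _)) hBE le_rfl hcoeff hB
  have hQ0 : compSubCompQuot X (B + E) B ≠ 0 := by
    rintro h0
    rw [h0, degree_zero] at hQ
    exact WithBot.bot_ne_coe hQ
  rw [comp_sub_comp_eq_compSubCompQuot_mul, add_sub_cancel_left, natDegree_mul hQ0 hE,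
    natDegree_eq_of_degree_eq_some hQ]

end CommRing

section Field

variable {K : Type*} [Field K]

theorem exists_eq_comp_or_not_dvd_natDegree_sub_comp {A : K[X]} (hA : 0 < A.natDegree)
    (P : K[X]) : ∃ S : K[X], P = S.comp A ∨ ¬ A.natDegree ∣ (P - S.comp A).natDegree := by
  induction P using degree_lt_wf.induction with
  | _ P ih =>
  rcases eq_or_ne P 0 with rfl | hP
  · exact ⟨0, Or.inl (zero_comp).symm⟩
  by_cases hdvd : A.natDegree ∣ P.natDegree
  swap
  · exact ⟨0, Or.inr (by rwa [zero_comp, sub_zero])⟩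
  obtain ⟨j, hj⟩ := hdvd
  have hA0 : A ≠ 0 := ne_zero_of_natDegree_gt hA
  -- cancel the leading term of `P` against `c * A ^ j`
  set c := P.leadingCoeff / A.leadingCoeff ^ j
  have hc : c ≠ 0 :=
    div_ne_zero (leadingCoeff_ne_zero.mpr hP) (pow_ne_zero _ (leadingCoeff_ne_zero.mpr hA0))
  have hlc : P.leadingCoeff = (C c * A ^ j).leadingCoeff := by
    rw [leadingCoeff_C_mul_of_isUnit (isUnit_iff_ne_zero.mpr hc), leadingCoeff_pow,
      div_mul_cancel₀ _ (pow_ne_zero _ (leadingCoeff_ne_zero.mpr hA0))]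
  have hdeg : P.degree = (C c * A ^ j).degree := by
    rw [degree_C_mul hc, degree_pow, degree_eq_natDegree hP, degree_eq_natDegree hA0, hj,
      nsmul_eq_mul, mul_comm]
    norm_cast
  obtain ⟨S, hS⟩ := ih _ (degree_sub_lt_left hdeg hP hlc)
  refine ⟨S + C c * Polynomial.X ^ j, ?_⟩
  have hsub : P - (S + C c * Polynomial.X ^ j).comp A = P - C c * A ^ j - S.comp A := by
    rw [add_comp, mul_comp, C_comp, X_pow_comp]; ring
  rw [← sub_eq_zero (a := P), hsub]
  exact hS.imp (fun h => by rw [← h, sub_self]) id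

theorem exists_eq_comp_of_comp_eq_comp [CharZero K] {X W A P : K[X]} (hX : 0 < X.natDegree)
    (hA : 0 < A.natDegree) (hdvd : A.natDegree ∣ P.natDegree) (h : X.comp P = W.comp A) :
    ∃ S : K[X], P = S.comp A ∧ W = X.comp S := by
  obtain ⟨S, hS | hndvd⟩ := exists_eq_comp_or_not_dvd_natDegree_sub_comp hA P
  · exact ⟨S, hS, eq_of_comp_eq_comp hA (by rw [← h, hS, comp_assoc])⟩
  exfalso
  set B := S.comp A
  set E := P - B
  have hE : E ≠ 0 := fun h0 => hndvd (by rw [h0, natDegree_zero]; exact dvd_zero _)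
  have hB : A.natDegree ∣ B.natDegree := by rw [natDegree_comp]; exact dvd_mul_left _ _
  have hP : P = B + E := (add_sub_cancel B P).symm
  have hEB : E.natDegree < B.natDegree := by
    refine lt_of_le_of_ne (not_lt.mp fun hBE => hndvd ?_) fun hEB => hndvd (hEB ▸ hB)
    rwa [hP, natDegree_add_eq_right_of_natDegree_lt hBE] at hdvd
  have hdeg := natDegree_comp_add_sub_comp hX hE hEB
  rw [← hP, h, ← comp_assoc, ← sub_comp, natDegree_comp] at hdeg
  have hsum : A.natDegree ∣ (X.natDegree - 1) * B.natDegree + E.natDegree :=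
    hdeg ▸ dvd_mul_left _ _
  exact hndvd ((Nat.dvd_add_right (hB.mul_left _)).mp hsum)

end Field

end Polynomial

theorem natDegree_polyIter (A : Polynomial ℂ) (k : ℕ) :
    (polyIter A k).natDegree = A.natDegree ^ k := by
  induction k with
  | zero => simp [polyIter]
  | succ k ih => rw [polyIter, natDegree_comp, ih, pow_succ']

theorem polyIter_succ' (A : Polynomial ℂ) (k : ℕ) :
    polyIter A (k + 1) = (polyIter A k).comp A := by
  induction k with
  | zero => simp [polyIter]
  | succ k ih =>
    show A.comp (polyIter A (k + 1)) = (A.comp (polyIter A k)).comp A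
    rw [ih, comp_assoc]

theorem iterate_left_factor_bounded_general
    (A X R : Polynomial ℂ) (hA : 2 ≤ A.natDegree) (hX : 1 ≤ X.natDegree)
    (d : ℕ) (h : polyIter A d = X.comp R) :
    ∃ (N : ℕ) (R' : Polynomial ℂ), N ≤ Nat.log 2 X.natDegree ∧ N ≤ d ∧
      polyIter A N = X.comp R' ∧ R = R'.comp (polyIter A (d - N)) := by
  induction d generalizing R with
  | zero => exact ⟨0, R, Nat.zero_le _, le_rfl, h, by simp [polyIter]⟩
  | succ d ih =>
    by_cases hlog : d + 1 ≤ Nat.log 2 X.natDegree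
    · exact ⟨d + 1, R, hlog, le_rfl, h, by simp [polyIter]⟩
    have hdvd : A.natDegree ∣ R.natDegree :=
      dvd_of_mul_eq_pow_of_lt_two_pow (by omega)
        (by rw [← natDegree_comp, ← h, natDegree_polyIter])
        (Nat.lt_pow_of_log_lt one_lt_two (by omega))
    obtain ⟨S, rfl, hS⟩ :=
      exists_eq_comp_of_comp_eq_comp hX (by omega) hdvd (by rw [← h, polyIter_succ'])
    obtain ⟨N, R', hN, hNd, hR', rfl⟩ := ih S hS
    refine ⟨N, R', hN, by omega, hR', ?_⟩
    rw [comp_assoc, ← polyIter_succ', Nat.sub_add_comm hNd]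

theorem iterate_left_factor_bounded
    (A X R : Polynomial ℂ) (hA : 2 ≤ A.natDegree) (hX : 1 ≤ X.natDegree)
    (d : ℕ) (hd : 1 ≤ d) (h : polyIter A d = X.comp R) :
    ∃ (N : ℕ) (R' : Polynomial ℂ), N ≤ Nat.log 2 X.natDegree ∧ N ≤ d ∧
      polyIter A N = X.comp R' ∧ R = R'.comp (polyIter A (d - N)) :=
  iterate_left_factor_bounded_general A X R hA hX d h
end

section
/- Let A, f, g be nonconstant polynomials over ℂ such that A∘f = A∘g. Then there exists a polynomial μ of degree one such that A∘μ = A and f = μ∘g. -/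
/-!
Let `n = deg A`. Leading terms of `A ∘ f = A ∘ g` give `deg f = deg g` and `lc f = a · lc g` with
`a ^ n = 1`. Only the top term `lc A · X ^ n` of `A` reaches degrees above `(n - 1) deg g`, so
`f ^ n - g ^ n = f ^ n - (a g) ^ n` has degree at most `(n - 1) deg g`. This difference is
`f - a g` times `∑ f ^ i (a g) ^ (n - 1 - i)`, whose `n` summands share their leading coefficient,
so in characteristic zero the cofactor has degree exactly `(n - 1) deg g`. Hence `f - a g` is a
constant `b`, so `f = μ ∘ g` with `μ = a X + b`, and `A ∘ μ = A` by cancelling `g` on the right.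
-/

open Polynomial Finset

namespace Polynomial

section Ring

variable {R : Type*} [CommRing R] [NoZeroDivisors R]

theorem eq_of_comp_eq_comp_s4 {p q g : R[X]} (hg : g.natDegree ≠ 0) (h : p.comp g = q.comp g) :
    p = q := by
  have hsub : (p - q).comp g = 0 := by rw [sub_comp, h, sub_self]
  rcases comp_eq_zero_iff.mp hsub with hpq | ⟨-, hgC⟩
  · exact sub_eq_zero.mp hpq
  · exact absurd (by rw [hgC]; exact natDegree_C _) hg

theorem natDegree_eq_of_comp_eq {A f g : R[X]} (hA : A.natDegree ≠ 0)
    (h : A.comp f = A.comp g) : f.natDegree = g.natDegree := by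
  have hdeg := congrArg natDegree h
  rw [natDegree_comp, natDegree_comp] at hdeg
  exact Nat.eq_of_mul_eq_mul_left (Nat.pos_of_ne_zero hA) hdeg

theorem leadingCoeff_pow_eq_of_comp_eq {A f g : R[X]} (hA : A ≠ 0) (hf : f.natDegree ≠ 0)
    (hg : g.natDegree ≠ 0) (h : A.comp f = A.comp g) :
    f.leadingCoeff ^ A.natDegree = g.leadingCoeff ^ A.natDegree := by
  have hlc := congrArg leadingCoeff h
  rw [leadingCoeff_comp hf, leadingCoeff_comp hg] at hlc
  exact mul_left_cancel₀ (leadingCoeff_ne_zero.mpr hA) hlc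

theorem natDegree_pow_sub_pow_le_of_comp_eq {A f g : R[X]} {m : ℕ} (hf : f.natDegree ≤ m)
    (hg : g.natDegree ≤ m) (h : A.comp f = A.comp g) :
    (f ^ A.natDegree - g ^ A.natDegree).natDegree ≤ (A.natDegree - 1) * m := by
  rcases eq_or_ne A 0 with rfl | hA
  · simp
  have hcomp : ∀ p : R[X],
      A.comp p = A.eraseLead.comp p + C A.leadingCoeff * p ^ A.natDegree := fun p => by
    conv_lhs => rw [← A.eraseLead_add_C_mul_X_pow]
    rw [add_comp, mul_comp, C_comp, X_pow_comp]
  have hlow : ∀ p : R[X], p.natDegree ≤ m →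
      (A.eraseLead.comp p).natDegree ≤ (A.natDegree - 1) * m := fun p hp =>
    natDegree_comp_le.trans (Nat.mul_le_mul A.eraseLead_natDegree_le hp)
  have hdiff : C A.leadingCoeff * (f ^ A.natDegree - g ^ A.natDegree) =
      A.eraseLead.comp g - A.eraseLead.comp f := by
    linear_combination -hcomp f + hcomp g + h
  rw [← natDegree_C_mul (leadingCoeff_ne_zero.mpr hA), hdiff]
  exact (natDegree_sub_le _ _).trans (max_le (hlow g hg) (hlow f hf))

theorem degree_geom_sum₂_of_leadingCoeff_eq [CharZero R] {f g : R[X]} {n : ℕ} (hn : n ≠ 0)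
    (hdeg : g.natDegree = f.natDegree) (hf0 : f ≠ 0) (hlc : f.leadingCoeff = g.leadingCoeff) :
    (∑ i ∈ range n, f ^ i * g ^ (n - 1 - i)).degree = ((n - 1) * f.natDegree : ℕ) := by
  have hsplit : ∀ i ∈ range n,
      (n - 1) * f.natDegree = i * f.natDegree + (n - 1 - i) * f.natDegree := fun i hi => by
    rw [← add_mul, Nat.add_sub_cancel' (Nat.le_sub_one_of_lt (mem_range.mp hi))]
  have hterm : ∀ i ∈ range n, (f ^ i * g ^ (n - 1 - i)).natDegree ≤ (n - 1) * f.natDegree :=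
    fun i hi => by
      rw [hsplit i hi]
      exact natDegree_mul_le_of_le (natDegree_pow_le_of_le _ le_rfl)
        (natDegree_pow_le_of_le _ hdeg.le)
  have hcoeff : ∀ i ∈ range n, (f ^ i * g ^ (n - 1 - i)).coeff ((n - 1) * f.natDegree) =
      f.leadingCoeff ^ (n - 1) := fun i hi => by
    rw [hsplit i hi, coeff_mul_add_eq_of_natDegree_le (natDegree_pow_le_of_le _ le_rfl)
      (natDegree_pow_le_of_le _ hdeg.le), coeff_pow_of_natDegree_le le_rfl,
      coeff_pow_of_natDegree_le hdeg.le, coeff_natDegree, ← hdeg, coeff_natDegree, ← hlc,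
      ← pow_add, Nat.add_sub_cancel' (Nat.le_sub_one_of_lt (mem_range.mp hi))]
  apply degree_eq_of_le_of_coeff_ne_zero
    (degree_le_of_natDegree_le (natDegree_sum_le_of_forall_le _ _ hterm))
  rw [finsetSum_coeff, sum_congr rfl hcoeff, sum_const, card_range, nsmul_eq_mul]
  exact mul_ne_zero (Nat.cast_ne_zero.mpr hn) (pow_ne_zero _ (leadingCoeff_ne_zero.mpr hf0))

end Ring

theorem exists_eq_C_mul_add_C_of_comp_eq {K : Type*} [Field K] [CharZero K] {A f g : K[X]}
    (hA : A.natDegree ≠ 0) (hg : g.natDegree ≠ 0) (h : A.comp f = A.comp g) :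
    ∃ a b : K, a ≠ 0 ∧ f = C a * g + C b := by
  have hdeg : f.natDegree = g.natDegree := natDegree_eq_of_comp_eq hA h
  have hf : f.natDegree ≠ 0 := hdeg ▸ hg
  have hf0 : f ≠ 0 := ne_zero_of_natDegree_gt (Nat.pos_of_ne_zero hf)
  have hglc : g.leadingCoeff ≠ 0 :=
    leadingCoeff_ne_zero.mpr (ne_zero_of_natDegree_gt (Nat.pos_of_ne_zero hg))
  set a := f.leadingCoeff / g.leadingCoeff
  have ha : a ≠ 0 := div_ne_zero (leadingCoeff_ne_zero.mpr hf0) hglc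
  have han : a ^ A.natDegree = 1 := by
    rw [div_pow, leadingCoeff_pow_eq_of_comp_eq (ne_zero_of_natDegree_gt (Nat.pos_of_ne_zero hA))
      hf hg h, div_self (pow_ne_zero _ hglc)]
  have hfactor : f ^ A.natDegree - g ^ A.natDegree =
      (∑ i ∈ range A.natDegree, f ^ i * (C a * g) ^ (A.natDegree - 1 - i)) * (f - C a * g) := by
    rw [geom_sum₂_mul, mul_pow, ← C_pow, han, C_1, one_mul]
  have hcofactor := degree_geom_sum₂_of_leadingCoeff_eq (g := C a * g) hA
    (by rw [natDegree_C_mul ha, hdeg]) hf0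
    (by rw [leadingCoeff_mul, leadingCoeff_C, div_mul_cancel₀ _ hglc])
  have hle := degree_le_of_natDegree_le (natDegree_pow_sub_pow_le_of_comp_eq le_rfl hdeg.ge h)
  rw [hfactor, degree_mul, hcofactor] at hle
  have hr : (f - C a * g).degree ≤ 0 :=
    (WithBot.add_le_add_iff_left WithBot.coe_ne_bot).mp (by rwa [add_zero])
  exact ⟨a, (f - C a * g).coeff 0, ha, by rw [← eq_C_of_degree_le_zero hr]; ring⟩

end Polynomial

theorem comp_cancel_of_polynomials_general
    (A f g : Polynomial ℂ) (hA : 1 ≤ A.natDegree)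
    (hg : 1 ≤ g.natDegree) (h : A.comp f = A.comp g) :
    ∃ μ : Polynomial ℂ, μ.degree = 1 ∧ A.comp μ = A ∧ f = μ.comp g := by
  obtain ⟨a, b, ha, hfab⟩ := exists_eq_C_mul_add_C_of_comp_eq (by omega) (by omega) h
  have hμ : f = (C a * X + C b).comp g := by
    rw [hfab, add_comp, mul_comp, C_comp, X_comp, C_comp]
  refine ⟨C a * X + C b, degree_linear ha, eq_of_comp_eq_comp_s4 (g := g) (by omega) ?_, hμ⟩
  rw [comp_assoc, ← hμ, h]

theorem comp_cancel_of_polynomials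
    (A f g : Polynomial ℂ) (hA : 1 ≤ A.natDegree) (hf : 1 ≤ f.natDegree)
    (hg : 1 ≤ g.natDegree) (h : A.comp f = A.comp g) :
    ∃ μ : Polynomial ℂ, μ.degree = 1 ∧ A.comp μ = A ∧ f = μ.comp g :=
  comp_cancel_of_polynomials_general A f g hA hg h
end

section
/- Let A, C, D, B be nonconstant polynomials over ℂ such that A∘C = D∘B and deg D divides deg A. Then there exists a polynomial R over ℂ such that A = D∘R and B = R∘C. -/
/-!
Let `d = deg D` and `deg A = d k`. For `P`, `Q` of the same degree `n ≥ 1` and the same leading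
coefficient `β`, the divided difference `(D ∘ P - D ∘ Q) / (P - Q)` has degree `(d - 1) n` and
leading coefficient `d · lc D · β ^ (d - 1)`, which is nonzero in characteristic zero. Hence,
correcting `R` by monomials `t X ^ m` from the top down, the coefficients of `A - D ∘ R` can be
killed one at a time until `deg (A - D ∘ R) < (d - 1) k`, with `R` of degree `k` and with the leading
coefficient forced by `A ∘ C = D ∘ B`. Then `(A - D ∘ R) ∘ C = D ∘ B - D ∘ (R ∘ C)` is a multiple of
the divided difference of `B` and `R ∘ C`, of degree `(d - 1) k deg C`, while its own degree is
`deg (A - D ∘ R) · deg C`, smaller; so both `A - D ∘ R` and `B - R ∘ C` vanish.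
-/

open Polynomial Finset

namespace Polynomial

theorem degree_sub_lt_of_coeff_eq {S : Type*} [Ring S] {p q : S[X]} {n : ℕ} (hp : p.degree ≤ n)
    (hq : q.degree ≤ n) (h : p.coeff n = q.coeff n) : (p - q).degree < n :=
  ((degree_sub_le p q).trans (max_le hp hq)).lt_of_ne fun hpq =>
    coeff_ne_zero_of_eq_degree hpq (by rw [coeff_sub, h, sub_self])

section CommRing

variable {S : Type*} [CommRing S]

noncomputable def dividedDiff (D P Q : S[X]) : S[X] :=
  ∑ i ∈ range (D.natDegree + 1), C (D.coeff i) * ∑ j ∈ range i, P ^ j * Q ^ (i - 1 - j)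

theorem comp_sub_comp_eq_mul_dividedDiff (D P Q : S[X]) :
    D.comp P - D.comp Q = (P - Q) * dividedDiff D P Q := by
  rw [dividedDiff, mul_sum, comp, comp, eval₂_eq_sum_range, eval₂_eq_sum_range, ← sum_sub_distrib]
  refine sum_congr rfl fun i _ => ?_
  rw [← mul_sub, ← geom_sum₂_mul]
  ring

theorem natDegree_dividedDiff_le (D : S[X]) {P Q : S[X]} {n : ℕ} (hP : P.natDegree ≤ n)
    (hQ : Q.natDegree ≤ n) : (dividedDiff D P Q).natDegree ≤ (D.natDegree - 1) * n := by
  refine natDegree_sum_le_of_forall_le _ _ fun i hi => ?_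
  refine (natDegree_C_mul_le _ _).trans (natDegree_sum_le_of_forall_le _ _ fun j hj => ?_)
  have hji : j + (i - 1 - j) ≤ D.natDegree - 1 := by
    rw [mem_range] at hi hj
    omega
  calc (P ^ j * Q ^ (i - 1 - j)).natDegree ≤ j * n + (i - 1 - j) * n :=
        natDegree_mul_le_of_le (natDegree_pow_le_of_le j hP) (natDegree_pow_le_of_le _ hQ)
    _ = (j + (i - 1 - j)) * n := by ring
    _ ≤ (D.natDegree - 1) * n := Nat.mul_le_mul_right n hji

variable [IsDomain S]

theorem coeff_dividedDiff (D : S[X]) {P Q : S[X]} {n : ℕ} (hn : 1 ≤ n) (hP : P.natDegree = n)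
    (hQ : Q.natDegree = n) (hPQ : P.leadingCoeff = Q.leadingCoeff) :
    (dividedDiff D P Q).coeff ((D.natDegree - 1) * n) =
      D.leadingCoeff * D.natDegree * Q.leadingCoeff ^ (D.natDegree - 1) := by
  have hP0 : P ≠ 0 := by rintro rfl; simp at hP; omega
  have hQ0 : Q ≠ 0 := by rintro rfl; simp at hQ; omega
  have hterm : ∀ i j, j < i → (P ^ j * Q ^ (i - 1 - j)).natDegree = (i - 1) * n ∧
      (P ^ j * Q ^ (i - 1 - j)).leadingCoeff = Q.leadingCoeff ^ (i - 1) := by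
    intro i j hji
    rw [natDegree_mul (pow_ne_zero _ hP0) (pow_ne_zero _ hQ0), natDegree_pow, natDegree_pow,
      leadingCoeff_mul, leadingCoeff_pow, leadingCoeff_pow, hP, hQ, hPQ, ← pow_add, ← add_mul]
    constructor <;> congr 1 <;> omega
  rw [dividedDiff, finsetSum_coeff, sum_range_succ, sum_eq_zero, zero_add, coeff_C_mul,
    finsetSum_coeff, sum_congr rfl (g := fun _ => Q.leadingCoeff ^ (D.natDegree - 1)), sum_const,
    card_range, nsmul_eq_mul]
  · change D.leadingCoeff * _ = _
    ring
  · intro j hj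
    rw [← (hterm D.natDegree j (mem_range.mp hj)).1, ← (hterm D.natDegree j (mem_range.mp hj)).2]
    rfl
  · intro i hi
    rw [coeff_C_mul, finsetSum_coeff, sum_eq_zero, mul_zero]
    intro j hj
    rw [mem_range] at hi hj
    apply coeff_eq_zero_of_natDegree_lt
    rw [(hterm i j hj).1]
    exact Nat.mul_lt_mul_of_pos_right (by omega) hn

theorem coeff_dividedDiff_ne_zero [CharZero S] {D P Q : S[X]} {n : ℕ} (hD : 1 ≤ D.natDegree)
    (hn : 1 ≤ n) (hP : P.natDegree = n) (hQ : Q.natDegree = n)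
    (hPQ : P.leadingCoeff = Q.leadingCoeff) :
    (dividedDiff D P Q).coeff ((D.natDegree - 1) * n) ≠ 0 := by
  have hD0 : D ≠ 0 := by rintro rfl; simp at hD
  have hQ0 : Q ≠ 0 := by rintro rfl; simp at hQ; omega
  rw [coeff_dividedDiff D hn hP hQ hPQ]
  exact mul_ne_zero (mul_ne_zero (leadingCoeff_ne_zero.mpr hD0) (by simp; omega))
    (pow_ne_zero _ (leadingCoeff_ne_zero.mpr hQ0))

end CommRing

section Field

variable {K : Type*} [Field K] [CharZero K]

theorem exists_degree_sub_comp_lt_of_degree_le {A D R : K[X]} {k m : ℕ} (hD : 1 ≤ D.natDegree)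
    (hm : m < k) (hR : R.natDegree = k)
    (hAR : (A - D.comp R).degree ≤ ↑((D.natDegree - 1) * k + m)) :
    ∃ R' : K[X], R'.natDegree = k ∧ R'.leadingCoeff = R.leadingCoeff ∧
      (A - D.comp R').degree < ↑((D.natDegree - 1) * k + m) := by
  set N := (D.natDegree - 1) * k + m
  have hR0 : R ≠ 0 := by rintro rfl; simp at hR; omega
  set t := (A - D.comp R).coeff N /
    (D.leadingCoeff * D.natDegree * R.leadingCoeff ^ (D.natDegree - 1))
  have hsmall : (C t * X ^ m).degree < R.degree := by
    refine (degree_C_mul_X_pow_le m t).trans_lt ?_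
    rw [degree_eq_natDegree hR0, hR]
    exact_mod_cast hm
  set R' := R + C t * X ^ m
  have hR' : R'.natDegree = k := (natDegree_add_eq_left_of_degree_lt hsmall).trans hR
  have hR'lc : R'.leadingCoeff = R.leadingCoeff := leadingCoeff_add_of_degree_lt' hsmall
  refine ⟨R', hR', hR'lc, ?_⟩
  set G := dividedDiff D R' R
  have hAR' : A - D.comp R' = (A - D.comp R) - X ^ m * (C t * G) := by
    have hdiff := comp_sub_comp_eq_mul_dividedDiff D R' R
    simp only [R', add_sub_cancel_left] at hdiff
    linear_combination -hdiff
  have hGc : (C t * G).coeff ((D.natDegree - 1) * k) = (A - D.comp R).coeff N := by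
    have hlG := coeff_dividedDiff_ne_zero hD (by omega) hR' hR hR'lc
    rw [coeff_dividedDiff D (by omega) hR' hR hR'lc] at hlG
    rw [coeff_C_mul, coeff_dividedDiff D (by omega) hR' hR hR'lc, div_mul_cancel₀ _ hlG]
  rw [hAR']
  refine degree_sub_lt_of_coeff_eq hAR (degree_le_of_natDegree_le ?_) ?_
  · refine natDegree_mul_le_of_le (natDegree_X_pow_le m) ((natDegree_C_mul_le _ _).trans
      (natDegree_dividedDiff_le D hR'.le hR.le)) |>.trans (by omega)
  · rw [coeff_X_pow_mul, hGc]

theorem exists_degree_sub_comp_lt {A D : K[X]} {k : ℕ} {ρ : K} (hD : 1 ≤ D.natDegree)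
    (hk : 1 ≤ k) (hA : A.natDegree = D.natDegree * k)
    (hρ : D.leadingCoeff * ρ ^ D.natDegree = A.leadingCoeff) :
    ∃ R : K[X], R.natDegree = k ∧ R.leadingCoeff = ρ ∧
      (A - D.comp R).degree < ↑((D.natDegree - 1) * k) := by
  suffices ∀ m ≤ k, ∃ R : K[X], R.natDegree = k ∧ R.leadingCoeff = ρ ∧
      (A - D.comp R).degree < ↑((D.natDegree - 1) * k + m) by simpa using this 0 k.zero_le
  intro m hm
  induction hm using Nat.decreasingInduction with
  | self =>
    have hρ0 : ρ ≠ 0 := by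
      rintro rfl
      rw [zero_pow (by omega), mul_zero, eq_comm, leadingCoeff_eq_zero] at hρ
      simp [hρ] at hA
      omega
    have hR : (C ρ * X ^ k).natDegree = k := natDegree_C_mul_X_pow k ρ hρ0
    have hdk : (D.natDegree - 1) * k + k = D.natDegree * k := by
      rw [Nat.sub_one_mul, Nat.sub_add_cancel (Nat.le_mul_of_pos_left k (by omega))]
    refine ⟨C ρ * X ^ k, hR, by simp, ?_⟩
    rw [hdk]
    have hdeg : (D.comp (C ρ * X ^ k)).natDegree = D.natDegree * k := by rw [natDegree_comp, hR]
    refine degree_sub_lt_of_coeff_eq (degree_le_of_natDegree_le hA.le)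
      (degree_le_of_natDegree_le hdeg.le) ?_
    calc A.coeff (D.natDegree * k) = A.leadingCoeff := by rw [leadingCoeff, hA]
      _ = (D.comp (C ρ * X ^ k)).leadingCoeff := by
        rw [leadingCoeff_comp (by omega), leadingCoeff_C_mul_X_pow, hρ]
      _ = (D.comp (C ρ * X ^ k)).coeff (D.natDegree * k) := by rw [leadingCoeff, hdeg]
  | of_succ m hmk ih =>
    obtain ⟨R, hR, hRlc, hAR⟩ := ih
    obtain ⟨R', hR', hR'lc, hAR'⟩ := exists_degree_sub_comp_lt_of_degree_le hD hmk hR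
      (Order.le_of_lt_succ hAR)
    exact ⟨R', hR', hR'lc.trans hRlc, hAR'⟩

theorem eq_comp_of_comp_eq_of_degree_sub_comp_lt {A B C D R : K[X]} (hC : 1 ≤ C.natDegree)
    (hD : 1 ≤ D.natDegree) (hB : 1 ≤ B.natDegree) (h : A.comp C = D.comp B)
    (hdeg : (R.comp C).natDegree = B.natDegree) (hlc : (R.comp C).leadingCoeff = B.leadingCoeff)
    (hAR : (A - D.comp R).degree < ↑((D.natDegree - 1) * R.natDegree)) :
    A = D.comp R ∧ B = R.comp C := by
  set G := dividedDiff D B (R.comp C)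
  have hG : G.coeff ((D.natDegree - 1) * B.natDegree) ≠ 0 :=
    coeff_dividedDiff_ne_zero hD hB rfl hdeg hlc.symm
  have hEC : (A - D.comp R).comp C = (B - R.comp C) * G := by
    rw [sub_comp, h, comp_assoc, comp_sub_comp_eq_mul_dividedDiff]
  have hEC0 : (A - D.comp R).comp C = 0 := by
    by_contra hne
    have hE0 : A - D.comp R ≠ 0 := by rintro h0; simp [h0] at hne
    have hlow : (D.natDegree - 1) * B.natDegree ≤ ((A - D.comp R).comp C).natDegree :=
      (le_natDegree_of_ne_zero hG).trans (natDegree_le_of_dvd (Dvd.intro_left _ hEC.symm) hne)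
    have hhigh := (natDegree_lt_iff_degree_lt hE0).mpr hAR
    rw [natDegree_comp, ← hdeg, natDegree_comp, ← mul_assoc] at hlow
    exact absurd (Nat.le_of_mul_le_mul_right hlow (by omega)) (not_le.mpr hhigh)
  have hCconst : C ≠ Polynomial.C (C.coeff 0) := fun h0 => by
    rw [h0, natDegree_C] at hC
    omega
  have hBRC : (B - R.comp C) * G = 0 := hEC ▸ hEC0
  refine ⟨sub_eq_zero.mp ((comp_eq_zero_iff.mp hEC0).resolve_right (hCconst ·.2)), ?_⟩
  exact sub_eq_zero.mp ((mul_eq_zero.mp hBRC).resolve_right fun h0 => hG (by rw [h0, coeff_zero]))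

end Field

end Polynomial


theorem ritt_degree_divides_general
    (A C D B : Polynomial ℂ) (hC : 1 ≤ C.natDegree)
    (hD : 1 ≤ D.natDegree) (hB : 1 ≤ B.natDegree)
    (h : A.comp C = D.comp B) (hdiv : D.natDegree ∣ A.natDegree) :
    ∃ R : Polynomial ℂ, A = D.comp R ∧ B = R.comp C := by
  obtain ⟨k, hk⟩ := hdiv
  have hBk : B.natDegree = k * C.natDegree := by
    have hdeg := congrArg natDegree h
    rw [natDegree_comp, natDegree_comp, hk, mul_assoc] at hdeg
    exact (Nat.eq_of_mul_eq_mul_left hD hdeg).symm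
  have hk1 : 1 ≤ k := Nat.pos_of_ne_zero (by rintro rfl; simp at hBk; omega)
  have hlcC : C.leadingCoeff ^ k ≠ 0 := pow_ne_zero _ (leadingCoeff_ne_zero.mpr (by
    rintro rfl; simp at hC))
  have hρ : D.leadingCoeff * (B.leadingCoeff / C.leadingCoeff ^ k) ^ D.natDegree =
      A.leadingCoeff := by
    have hlc := congrArg leadingCoeff h
    rw [leadingCoeff_comp (by omega), leadingCoeff_comp (by omega), hk, mul_comm _ k,
      pow_mul] at hlc
    rw [div_pow, mul_div_assoc', div_eq_iff (pow_ne_zero _ hlcC), ← hlc]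
  obtain ⟨R, hR, hRlc, hAR⟩ := exists_degree_sub_comp_lt hD hk1 hk hρ
  refine ⟨R, eq_comp_of_comp_eq_of_degree_sub_comp_lt hC hD hB h ?_ ?_ (hR ▸ hAR)⟩
  · rw [natDegree_comp, hR, hBk]
  · rw [leadingCoeff_comp (by omega), hRlc, hR, div_mul_cancel₀ _ hlcC]

theorem ritt_degree_divides
    (A C D B : Polynomial ℂ) (hA : 1 ≤ A.natDegree) (hC : 1 ≤ C.natDegree)
    (hD : 1 ≤ D.natDegree) (hB : 1 ≤ B.natDegree)
    (h : A.comp C = D.comp B) (hdiv : D.natDegree ∣ A.natDegree) :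
    ∃ R : Polynomial ℂ, A = D.comp R ∧ B = R.comp C :=
  ritt_degree_divides_general A C D B hC hD hB h hdiv
end

section
/- Let m, n be natural numbers with m ≥ 1 and n ≥ 2 such that every prime dividing m also divides n. Then m divides n^⌊log₂ m⌋. -/
/-! Every prime power `p ^ e ∥ m` satisfies `2 ^ e ≤ p ^ e ≤ m`, so `e ≤ ⌊log₂ m⌋`. Hence `m`
divides the `⌊log₂ m⌋`-th power of its radical, which divides `n` because every prime factor of `m`
divides `n`. -/

namespace Nat

theorem factorization_le_log_two (m p : ℕ) : m.factorization p ≤ Nat.log 2 m := by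
  rcases eq_or_ne m 0 with rfl | hm
  · simp
  by_cases hp : p.Prime
  · refine le_log_of_pow_le one_lt_two ?_
    calc 2 ^ m.factorization p ≤ p ^ m.factorization p := Nat.pow_le_pow_left hp.two_le _
      _ ≤ m := ordProj_le p hm
  · simp [factorization_eq_zero_of_not_prime m hp]

theorem dvd_prod_primeFactors_pow {m k : ℕ} (hm : m ≠ 0) (hk : ∀ p, m.factorization p ≤ k) :
    m ∣ (∏ p ∈ m.primeFactors, p) ^ k := by
  calc m = ∏ p ∈ m.primeFactors, p ^ m.factorization p := prod_primeFactors_pow_factorization hm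
    _ ∣ ∏ p ∈ m.primeFactors, p ^ k :=
      Finset.prod_dvd_prod_of_dvd _ _ fun p _ ↦ pow_dvd_pow p (hk p)
    _ = (∏ p ∈ m.primeFactors, p) ^ k := Finset.prod_pow _ _ _

theorem prod_primeFactors_dvd_of_forall_prime_dvd {m n : ℕ} (hn : n ≠ 0)
    (h : ∀ p : ℕ, p.Prime → p ∣ m → p ∣ n) : ∏ p ∈ m.primeFactors, p ∣ n := by
  have hsub : m.primeFactors ⊆ n.primeFactors := fun p hp ↦
    mem_primeFactors.mpr ⟨prime_of_mem_primeFactors hp,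
      h p (prime_of_mem_primeFactors hp) (dvd_of_mem_primeFactors hp), hn⟩
  exact (Finset.prod_dvd_prod_of_subset _ _ _ hsub).trans (prod_primeFactors_dvd n)

end Nat

theorem dvd_pow_log_of_primes_dvd
    (m n : ℕ) (hm : 1 ≤ m) (hn : 2 ≤ n)
    (h : ∀ p : ℕ, p.Prime → p ∣ m → p ∣ n) :
    m ∣ n ^ Nat.log 2 m :=
  (Nat.dvd_prod_primeFactors_pow (by omega) (Nat.factorization_le_log_two m)).trans <|
    pow_dvd_pow_of_dvd (Nat.prod_primeFactors_dvd_of_forall_prime_dvd (by omega) h) _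
end

section
/- Let m ≥ 3 be an integer, let μ and ν be polynomials of degree one over ℂ, let ε, δ ∈ {1, −1}, and set B = ε·(T_m∘μ). If B∘B = δ·(T_{m²}∘ν), then μ = z or μ = −z. -/
/-!
For `P = ε • T_m ∘ f` with `ε ^ 2 = 1`, the Pell identity `T_m² - (X² - 1) U_{m-1}² = 1` and
`T_m' = m U_{m-1}` give `(f² - 1) P'² = m² f'² (P² - 1)`. Writing `B ∘ B` both as
`ε • T_m ∘ w` with `w = μ ∘ B` and as `δ • T_{m²} ∘ ν`, the two instances of this identity yield
`m² w'² (ν² - 1) = m⁴ ν'² (w² - 1)`; as `ν'` is a nonzero constant, `w² = 1` at every critical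
point of `w`. Over the interior extrema `cos (k π / m)` of `T_m` lie critical points of `B` where
`B = ε (-1) ^ k`, so `m ≥ 3` (giving `k = 1, 2`) yields `μ(1)² = μ(-1)² = 1`, hence `μ = ±X`.
-/

open Polynomial Real

namespace Polynomial.Chebyshev

variable {R : Type*} [CommRing R]

theorem T_sq_sub_X_sq_sub_one_mul_U_sq (n : ℤ) :
    T R n ^ 2 - (X ^ 2 - 1) * U R (n - 1) ^ 2 = 1 := by
  have step (n : ℤ) : T R (n + 1) ^ 2 - (X ^ 2 - 1) * U R (n + 1 - 1) ^ 2 =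
      T R n ^ 2 - (X ^ 2 - 1) * U R (n - 1) ^ 2 := by
    have hT := T_eq_X_mul_T_sub_pol_U R (n - 1)
    have hU := U_eq_X_mul_U_add_T R (n - 1)
    simp only [sub_add_cancel, show n - 1 + 2 = n + 1 by ring, add_sub_cancel_right] at hT hU ⊢
    rw [hT, hU]
    ring
  induction n using Int.induction_on with
  | zero => simp
  | succ k ih => rw [step, ih]
  | pred k ih =>
    have h := step (-k - 1)
    rw [sub_add_cancel] at h
    rw [← h, ih]

theorem sq_sub_one_mul_derivative_T_sq (n : ℤ) :
    (X ^ 2 - 1) * derivative (T R n) ^ 2 = (n : R[X]) ^ 2 * (T R n ^ 2 - 1) := by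
  rw [T_derivative_eq_U]
  linear_combination -(n : R[X]) ^ 2 * T_sq_sub_X_sq_sub_one_mul_U_sq (R := R) n

theorem sq_sub_one_mul_derivative_smul_T_comp_sq {ε : R} (hε : ε ^ 2 = 1) (n : ℤ) (f : R[X]) :
    (f ^ 2 - 1) * derivative (ε • (T R n).comp f) ^ 2 =
      (n : R[X]) ^ 2 * derivative f ^ 2 * ((ε • (T R n).comp f) ^ 2 - 1) := by
  have h := congrArg (·.comp f) (sq_sub_one_mul_derivative_T_sq (R := R) n)
  simp only [mul_comp, sub_comp, pow_comp, X_comp, one_comp, intCast_comp] at h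
  have hC : Polynomial.C ε ^ 2 = 1 := by rw [← C_pow, hε, C_1]
  rw [derivative_smul, derivative_comp, smul_eq_C_mul, smul_eq_C_mul]
  linear_combination
    Polynomial.C ε ^ 2 * derivative f ^ 2 * h - (n : R[X]) ^ 2 * derivative f ^ 2 * hC

theorem sq_mul_derivative_sq_mul_eq_of_smul_T_comp_eq [IsDomain R]
    {ε δ : R} (hε : ε ^ 2 = 1) (hδ : δ ^ 2 = 1) {m n : ℤ} {f g : R[X]}
    (h : ε • (T R m).comp f = δ • (T R n).comp g)
    (hP : derivative (ε • (T R m).comp f) ≠ 0) :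
    (m : R[X]) ^ 2 * derivative f ^ 2 * (g ^ 2 - 1) =
      (n : R[X]) ^ 2 * derivative g ^ 2 * (f ^ 2 - 1) := by
  set P := ε • (T R m).comp f
  have hf : (f ^ 2 - 1) * derivative P ^ 2 = (m : R[X]) ^ 2 * derivative f ^ 2 * (P ^ 2 - 1) :=
    sq_sub_one_mul_derivative_smul_T_comp_sq hε m f
  have hg : (g ^ 2 - 1) * derivative P ^ 2 = (n : R[X]) ^ 2 * derivative g ^ 2 * (P ^ 2 - 1) :=
    h ▸ sq_sub_one_mul_derivative_smul_T_comp_sq hδ n g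
  refine mul_left_cancel₀ (pow_ne_zero 2 hP) ?_
  linear_combination
    (m : R[X]) ^ 2 * derivative f ^ 2 * hg - (n : R[X]) ^ 2 * derivative g ^ 2 * hf

theorem exists_eval_derivative_T_complex_eq_zero {n k : ℕ} (hk₀ : 0 < k) (hk : k < n) :
    ∃ x : ℂ, (derivative (T ℂ n)).eval x = 0 ∧ (T ℂ n).eval x = (-1) ^ k := by
  have hn : n ≠ 0 := by omega
  set x := cos (k * π / n)
  have hcrit : (derivative (T ℝ n)).eval x = 0 := by
    rw [← Polynomial.deriv]
    exact (isLocalExtr_T_real hn hk₀ hk).deriv_eq_zero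
  refine ⟨x, ?_, ?_⟩
  · rw [← map_T (algebraMap ℝ ℂ), derivative_map, ← Complex.coe_algebraMap, eval_map,
      eval₂_at_apply, hcrit, map_zero]
  · rw [← complex_ofReal_eval_T, eval_T_real_cos_int_mul_pi_div hn]
    simp

theorem exists_eval_derivative_smul_T_comp_eq_zero {n k : ℕ} (hk₀ : 0 < k) (hk : k < n)
    (ε : ℂ) {μ : ℂ[X]} (hμ : μ.degree = 1) :
    ∃ p : ℂ, (derivative (ε • (T ℂ n).comp μ)).eval p = 0 ∧
      (ε • (T ℂ n).comp μ).eval p = ε * (-1) ^ k := by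
  obtain ⟨x, hx', hx⟩ := exists_eval_derivative_T_complex_eq_zero hk₀ hk
  obtain ⟨p, hp⟩ := exists_root_of_degree_eq_one (p := μ - Polynomial.C x) (by
    rw [degree_sub_C] <;> simp [hμ])
  rw [IsRoot, eval_sub, eval_C, sub_eq_zero] at hp
  refine ⟨p, ?_, ?_⟩
  · simp [derivative_comp, hp, hx']
  · rw [eval_smul, eval_comp, hp, hx, smul_eq_mul]

end Polynomial.Chebyshev

theorem Polynomial.eq_X_or_eq_neg_X_of_eval_sq_eq_one {K : Type*} [Field K] [NeZero (2 : K)]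
    {μ : K[X]} (hμ : μ.degree = 1) (h₁ : μ.eval 1 ^ 2 = 1) (h₂ : μ.eval (-1) ^ 2 = 1) :
    μ = X ∨ μ = -X := by
  set a := μ.coeff 1
  set b := μ.coeff 0
  have hμ_eq : μ = C a * X + C b := eq_X_add_C_of_degree_le_one hμ.le
  have ha : a ≠ 0 := coeff_ne_zero_of_eq_degree hμ
  rw [hμ_eq] at h₁ h₂ ⊢
  simp only [eval_add, eval_mul, eval_C, eval_X] at h₁ h₂
  have hb : b = 0 := by
    have h4 : (2 * 2 * a) * b = 0 := by linear_combination h₁ - h₂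
    exact (mul_eq_zero.mp h4).resolve_left (mul_ne_zero (mul_ne_zero two_ne_zero two_ne_zero) ha)
  have ha_sq : (a - 1) * (a + 1) = 0 := by linear_combination h₁ + (-2 * a - b) * hb
  rw [hb, C_0, add_zero]
  rcases mul_eq_zero.mp ha_sq with ha₁ | ha₁
  · left
    rw [sub_eq_zero.mp ha₁, C_1, one_mul]
  · right
    rw [eq_neg_of_add_eq_zero_left ha₁, C_neg, C_1, neg_one_mul]

theorem Polynomial.eval_sq_eq_one_of_eval_derivative_eq_zero {K : Type*} [Field K] [CharZero K]
    {m n : ℤ} {f g : K[X]} (hn : n ≠ 0) (hg : g.degree = 1)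
    (h : (m : K[X]) ^ 2 * derivative f ^ 2 * (g ^ 2 - 1) =
      (n : K[X]) ^ 2 * derivative g ^ 2 * (f ^ 2 - 1))
    {p : K} (hp : (derivative f).eval p = 0) : f.eval p ^ 2 = 1 := by
  have hg' : derivative g = C (g.coeff 1) := by
    conv_lhs => rw [eq_X_add_C_of_degree_le_one hg.le]
    simp
  have hc : g.coeff 1 ≠ 0 := coeff_ne_zero_of_eq_degree hg
  have hkey := congrArg (eval p) h
  simp only [eval_mul, eval_pow, eval_sub, eval_one, eval_intCast, eval_C, hp, hg'] at hkey
  have hzero : ((n : K) ^ 2 * g.coeff 1 ^ 2) * (f.eval p ^ 2 - 1) = 0 := by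
    linear_combination -hkey
  exact sub_eq_zero.mp ((mul_eq_zero.mp hzero).resolve_left (by simp [hn, hc]))

theorem chebyshev_square_conjugacy
    (m : ℕ) (hm : 3 ≤ m) (μ ν : Polynomial ℂ)
    (hμ : μ.degree = 1) (hν : ν.degree = 1)
    (ε δ : ℂ) (hε : ε = 1 ∨ ε = -1) (hδ : δ = 1 ∨ δ = -1)
    (B : Polynomial ℂ)
    (hB : B = ε • ((Polynomial.Chebyshev.T ℂ (m : ℤ)).comp μ))
    (h : B.comp B = δ • ((Polynomial.Chebyshev.T ℂ ((m : ℤ) ^ 2)).comp ν)) :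
    μ = Polynomial.X ∨ μ = -Polynomial.X := by
  have hε₂ : ε ^ 2 = 1 := by rcases hε with rfl | rfl <;> norm_num
  have hδ₂ : δ ^ 2 = 1 := by rcases hδ with rfl | rfl <;> norm_num
  have hm₀ : (m : ℤ) ^ 2 ≠ 0 := by positivity
  have hBB : B.comp B = ε • (Chebyshev.T ℂ m).comp (μ.comp B) := by
    nth_rewrite 1 [hB]
    rw [smul_comp, comp_assoc]
  have hP : derivative (B.comp B) ≠ 0 := by
    have hδ₀ : δ ≠ 0 := by rintro rfl; norm_num at hδ₂
    rw [h, derivative_ne_zero, natDegree_smul _ hδ₀, natDegree_comp, Chebyshev.natDegree_T,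
      natDegree_eq_of_degree_eq_some hν]
    simpa using hm₀
  have hcrit := Chebyshev.sq_mul_derivative_sq_mul_eq_of_smul_T_comp_eq hε₂ hδ₂
    (hBB.symm.trans h) (hBB ▸ hP)
  have hμ_sq (k : ℕ) (hk₀ : 0 < k) (hk : k < m) : μ.eval (ε * (-1) ^ k) ^ 2 = 1 := by
    obtain ⟨p, hB'p, hBp⟩ := Chebyshev.exists_eval_derivative_smul_T_comp_eq_zero hk₀ hk ε hμ
    rw [← hB] at hB'p hBp
    have hw' : (derivative (μ.comp B)).eval p = 0 := by simp [derivative_comp, hB'p]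
    simpa [hBp] using eval_sq_eq_one_of_eval_derivative_eq_zero hm₀ hν hcrit hw'
  have h₁ := hμ_sq 2 (by norm_num) (by omega)
  have h₂ := hμ_sq 1 (by norm_num) (by omega)
  rcases hε with rfl | rfl
  · exact eq_X_or_eq_neg_X_of_eval_sq_eq_one hμ (by simpa using h₁) (by simpa using h₂)
  · exact eq_X_or_eq_neg_X_of_eval_sq_eq_one hμ (by simpa using h₂) (by simpa using h₁)
end
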